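/- For any finite group G and k ≥ 2, cp_k(G) = (1/|G|) ∑_{i=1}^{l} cp_{k-1}(Z_G(g_i)) / |C(g_i)|^{k-2}, where g_1,…,g_l are conjugacy class representatives, C(g_i) is the conjugacy class of g_i, and Z_G(g_i) its centralizer. -/

import Mathlib

/-!
Removing the first entry `x` of a commuting `(m+1)`-tuple of `H` leaves a commuting `m`-tuple of
the centralizer `Z(x)`, so `|H^{(m+1)}| = ∑ₓ |Z(x)^{(m)}|`. Since `|Z(x)| = |H| / |C(x)|`, this reads
`cp_{m+1}(H) = (1/|H|) ∑ₓ cp_m(Z(x)) / |C(x)|^m`. Conjugate elements have isomorphic centralizers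
and equal classes, so the summand is a class function, and summing it over `H` amounts to summing
`|C(gᵢ)|` times its value over class representatives.
-/

/-- The probability `cp_m(H) = |H^{(m)}|/|H|^m` that an `m`-tuple of elements of `H`
pairwise commutes. -/
noncomputable def cp (H : Type*) [Group H] (m : ℕ) : ℚ :=
  (Nat.card {v : Fin m → H // ∀ i j, Commute (v i) (v j)} : ℚ) / (Nat.card H : ℚ) ^ m

open Subgroup

abbrev CommutingTuples (M : Type*) [Mul M] (m : ℕ) : Type _ :=
  {v : Fin m → M // ∀ i j, Commute (v i) (v j)}

def MulEquiv.commutingTuplesCongr {M N : Type*} [Mul M] [Mul N] (e : M ≃* N) (m : ℕ) :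
    CommutingTuples M m ≃ CommutingTuples N m where
  toFun v := ⟨fun i => e (v.1 i), fun i j => (v.2 i j).map e⟩
  invFun v := ⟨fun i => e.symm (v.1 i), fun i j => (v.2 i j).map e.symm⟩
  left_inv v := by ext i; simp
  right_inv v := by ext i; simp

theorem cp_congr {H K : Type*} [Group H] [Group K] (e : H ≃* K) (m : ℕ) : cp H m = cp K m := by
  rw [cp, cp, Nat.card_congr (e.commutingTuplesCongr m), Nat.card_congr e.toEquiv]

theorem map_conj_centralizer_singleton {G : Type*} [Group G] (c a : G) :
    (centralizer {a}).map (MulAut.conj c).toMonoidHom = centralizer {c * a * c⁻¹} := by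
  ext y
  rw [mem_map_equiv]
  simp only [MulAut.conj_symm_apply, mem_centralizer_singleton_iff]
  constructor <;> intro h
  · have := congrArg (fun z => c * z * c⁻¹) h
    simpa [mul_assoc] using this
  · have := congrArg (fun z => c⁻¹ * z * c) h
    simpa [mul_assoc] using this

theorem IsConj.cp_centralizer_eq {G : Type*} [Group G] {a b : G} (h : IsConj a b) (m : ℕ) :
    cp (centralizer {a}) m = cp (centralizer {b}) m := by
  obtain ⟨c, rfl⟩ := isConj_iff.mp h
  exact cp_congr (((MulAut.conj c).subgroupMap _).trans
    (MulEquiv.subgroupCongr (map_conj_centralizer_singleton c a))) m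

theorem IsConj.card_isConj_eq {G : Type*} [Monoid G] {a b : G} (h : IsConj a b) :
    Nat.card {x // IsConj a x} = Nat.card {x // IsConj b x} :=
  Nat.card_congr <| Equiv.subtypeEquivRight fun _ => ⟨h.symm.trans, h.trans⟩

theorem card_isConj_mul_card_centralizer {G : Type*} [Group G] (a : G) :
    Nat.card {x // IsConj a x} * Nat.card (centralizer {a}) = Nat.card G := by
  have hclass : Nat.card {x // IsConj a x} = (MulAction.stabilizer (ConjAct G) a).index := by
    rw [MulAction.index_stabilizer, ← Nat.card_coe_set_eq]
    exact Nat.card_congr <| Equiv.subtypeEquivRight fun _ =>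
      isConj_comm.trans ConjAct.mem_orbit_conjAct.symm
  rw [hclass, nat_card_centralizer_nat_card_stabilizer, index_mul_card]
  rfl

theorem card_isConj_ne_zero {G : Type*} [Monoid G] [Finite G] (a : G) :
    Nat.card {x // IsConj a x} ≠ 0 :=
  have : Nonempty {x // IsConj a x} := ⟨⟨a, .refl a⟩⟩
  Nat.card_pos.ne'

def commutingTuplesSuccEquiv (H : Type*) [Group H] (m : ℕ) :
    CommutingTuples H (m + 1) ≃ Σ x : H, CommutingTuples (centralizer {x}) m where
  toFun v := ⟨v.1 0, fun i => ⟨v.1 i.succ, mem_centralizer_singleton_iff.mpr (v.2 i.succ 0)⟩,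
    fun i j => Subtype.ext (v.2 i.succ j.succ)⟩
  invFun p := ⟨Fin.cons p.1 (fun i => (p.2.1 i : H)), by
    have hcomm (i : Fin m) : Commute p.1 (p.2.1 i) :=
      (mem_centralizer_singleton_iff.mp (p.2.1 i).2).symm
    intro i j
    refine Fin.cases ?_ (fun i' => ?_) i <;> refine Fin.cases ?_ (fun j' => ?_) j
    · exact Commute.refl _
    · simpa using hcomm j'
    · simpa using (hcomm i').symm
    · simpa using (p.2.2 i' j').map (centralizer {p.1}).subtype⟩
  left_inv v := by
    ext i
    refine Fin.cases ?_ (fun i' => ?_) i <;> simp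
  right_inv p := by
    refine Sigma.ext rfl (heq_of_eq ?_)
    ext i
    simp

theorem card_commutingTuples_succ (H : Type*) [Group H] [Fintype H] (m : ℕ) :
    Nat.card (CommutingTuples H (m + 1)) =
      ∑ x : H, Nat.card (CommutingTuples (centralizer {x}) m) := by
  rw [Nat.card_congr (commutingTuplesSuccEquiv H m), Nat.card_sigma]

theorem cp_succ (H : Type*) [Group H] [Fintype H] (m : ℕ) :
    cp H (m + 1) = 1 / (Nat.card H : ℚ) *
      ∑ x : H, cp (centralizer {x}) m / (Nat.card {y // IsConj x y} : ℚ) ^ m := by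
  rw [cp, card_commutingTuples_succ, Nat.cast_sum, Finset.sum_div, Finset.mul_sum]
  refine Finset.sum_congr rfl fun x _ => ?_
  have hclass : (Nat.card {y // IsConj x y} : ℚ) ≠ 0 := by exact_mod_cast card_isConj_ne_zero x
  have hcent : (Nat.card (centralizer {x}) : ℚ) ≠ 0 := by exact_mod_cast Nat.card_pos.ne'
  rw [cp, ← card_isConj_mul_card_centralizer x]
  push_cast
  field_simp
  ring

theorem sum_eq_sum_card_isConj_smul {G M ι : Type*} [Monoid G] [Fintype G] [Fintype ι]
    [AddCommMonoid M] (g : ι → G) (hrep : ∀ x, ∃! i, IsConj (g i) x) (f : G → M)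
    (hf : ∀ a b, IsConj a b → f a = f b) :
    ∑ x, f x = ∑ i, Nat.card {x // IsConj (g i) x} • f (g i) := by
  classical
  choose idx hidx huniq using hrep
  rw [← Finset.sum_fiberwise Finset.univ idx f]
  refine Finset.sum_congr rfl fun i _ => ?_
  have hfiber : Finset.univ.filter (idx · = i) = Finset.univ.filter (IsConj (g i)) := by
    ext x
    simp only [Finset.mem_filter, Finset.mem_univ, true_and]
    exact ⟨fun h => h ▸ hidx x, fun h => (huniq x i h).symm⟩
  rw [hfiber, Finset.sum_congr rfl fun x hx => (hf _ _ (Finset.mem_filter.1 hx).2).symm,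
    Finset.sum_const, Nat.card_eq_fintype_card, Fintype.card_subtype]

/-- Lescot's recursion: for `k ≥ 2`,
`cp_k(G) = (1/|G|) ∑_{i=1}^{l} cp_{k-1}(Z_G(g_i)) / |C(g_i)|^{k-2}`. -/
theorem stmt_8 (G : Type*) [Group G] [Finite G] (k : ℕ) (hk : 2 ≤ k)
    (l : ℕ) (g : Fin l → G) (hrep : ∀ x : G, ∃! i, IsConj (g i) x) :
    cp G k = (1 / (Nat.card G : ℚ)) *
      ∑ i, cp (↥(Subgroup.centralizer {g i})) (k - 1) /
        (Nat.card {x : G // IsConj (g i) x} : ℚ) ^ (k - 2) := by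
  have := Fintype.ofFinite G
  obtain ⟨m, rfl⟩ : ∃ m, k = m + 2 := ⟨k - 2, by omega⟩
  rw [cp_succ, sum_eq_sum_card_isConj_smul g hrep _ fun a b h => by
    rw [h.cp_centralizer_eq, h.card_isConj_eq]]
  congr 1
  refine Finset.sum_congr rfl fun i _ => ?_
  have hclass : (Nat.card {x // IsConj (g i) x} : ℚ) ≠ 0 := by
    exact_mod_cast card_isConj_ne_zero (g i)
  rw [nsmul_eq_mul, show m + 2 - 1 = m + 1 by omega, Nat.add_sub_cancel, pow_succ]
  field_simp
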